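/- arXiv:2204.09035 — 6 statements merged into one kernel-verified Lean document; each statement's English description precedes it below -/
import Mathlib

section
/- Let G be a finite simple graph, S ⊆ V(G), and let C be the vertex set of a connected component of G such that the induced subgraph G[C] is bipartite, with a proper 2-coloring c : C → {white, black}. Let H be the following graph on fresh vertices together with S ∩ C: H has a center vertex x and ray vertices S ∩ C; for each v ∈ S ∩ C colored white by c, H contains the edge xv; for each v ∈ S ∩ C colored black by c, H contains a new subdivision vertex y_v and the edges x y_v and y_v v (so V(H) ∩ V(G) = S ∩ C and all other vertices of H are new). Let G' be the graph obtained from G by deleting the component C and adding H, i.e., V(G') = (V(G) ∖ C) ∪ V(H) and E(G') = E(G − C) ∪ E(H). Then B_G(S) = B_{G'}(S). -/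
open scoped Classical

/-- A finite simple graph on a subset of an ambient vertex type `U`. -/
structure FinGraph (U : Type) where
  verts : Finset U
  G : SimpleGraph U
  support : ∀ ⦃u v : U⦄, G.Adj u v → u ∈ verts ∧ v ∈ verts

/-- The set of bipartitions `B_G(S)`: subsets `S' ⊆ S` for which some proper 2-coloring of `G`
colors all of `S'` with `true` and all of `S ∖ S'` with `false`. -/
def Bip {U : Type} [DecidableEq U] (G : SimpleGraph U) (S : Finset U) : Set (Finset U) :=
  {S' | S' ⊆ S ∧ ∃ c : U → Bool, (∀ ⦃u v⦄, G.Adj u v → c u ≠ c v) ∧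
    (∀ v ∈ S', c v = true) ∧ ∀ v ∈ S \ S', c v = false}

private lemma aux_ne_not (a b : Bool) (h : a ≠ b) : b = !a := by
  cases a <;> cases b <;> simp_all

private lemma aux_xor_not_not (a b : Bool) : xor (!a) (!b) = xor a b := by
  cases a <;> cases b <;> rfl

private lemma aux_bool1 (a b : Bool) : xor (xor a b) b = a := by
  cases a <;> cases b <;> rfl

private lemma aux_bool2 (a : Bool) : a ≠ xor a true := by cases a <;> decide

private lemma aux_bool3 (a : Bool) : a ≠ !a := by cases a <;> decide

private lemma aux_bool4 (a : Bool) : (!a) ≠ xor a false := by cases a <;> decide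

private lemma aux_bool5 (a b : Bool) : xor a b ≠ xor a (!b) := by
  cases a <;> cases b <;> decide

private lemma aux_walk_parity {U : Type} (Gg : SimpleGraph U) (C : Finset U) (d c : U → Bool)
    (hclosed : ∀ ⦃u v⦄, u ∈ C → Gg.Adj u v → v ∈ C)
    (hd : ∀ ⦃u v⦄, Gg.Adj u v → d u ≠ d v)
    (hc : ∀ ⦃u v⦄, u ∈ C → v ∈ C → Gg.Adj u v → c u ≠ c v) :
    ∀ (u v : U) (p : Gg.Walk u v), u ∈ C → xor (d u) (c u) = xor (d v) (c v) := by
  intro u v p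
  induction p with
  | nil => intro _; rfl
  | @cons a w v' h p ih =>
    intro hu
    have hw : w ∈ C := hclosed hu h
    have ih' := ih hw
    rw [aux_ne_not _ _ (hd h), aux_ne_not _ _ (hc hu hw h), aux_xor_not_not] at ih'
    exact ih'

/-- replacing a bipartite connected component `C` of `G` by a star on `S ∩ C`
(with the edges to black ray vertices subdivided) does not change the set of bipartitions
`B_G(S)`.  Here `x` is the fresh center of the star and `y v` is the fresh subdivision
vertex for a black ray vertex `v`. -/
theorem replace_component_keeps_bipartitions {U : Type} [DecidableEq U]
    (G : FinGraph U) (S C : Finset U) (hS : S ⊆ G.verts)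
    -- `C` is the vertex set of a connected component of `G`
    (hC : ∃ v₀ ∈ G.verts, C = G.verts.filter fun u => G.G.Reachable v₀ u)
    -- a proper 2-coloring of the induced subgraph `G[C]` (white = `true`, black = `false`)
    (c : U → Bool)
    (hc : ∀ ⦃u v⦄, u ∈ C → v ∈ C → G.G.Adj u v → c u ≠ c v)
    -- fresh vertices: the star center `x` and the subdivision vertices `y v`
    (x : U) (hx : x ∉ G.verts)
    (y : U → U)
    (hy : ∀ v ∈ S ∩ C, c v = false → y v ∉ G.verts ∧ y v ≠ x)
    (hyinj : ∀ v ∈ S ∩ C, ∀ v' ∈ S ∩ C, c v = false → c v' = false → y v = y v' → v = v')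
    -- the replacement graph `H`
    (H : FinGraph U)
    (hHverts : H.verts =
      insert x ((S ∩ C) ∪ ((S ∩ C).filter fun v => c v = false).image y))
    (hHadj : ∀ a b : U, H.G.Adj a b ↔ a ≠ b ∧
      (((a = x ∧ b ∈ S ∩ C ∧ c b = true) ∨
          (∃ v ∈ S ∩ C, c v = false ∧ a = x ∧ b = y v) ∨
          (∃ v ∈ S ∩ C, c v = false ∧ a = y v ∧ b = v)) ∨
        ((b = x ∧ a ∈ S ∩ C ∧ c a = true) ∨
          (∃ v ∈ S ∩ C, c v = false ∧ b = x ∧ a = y v) ∨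
          (∃ v ∈ S ∩ C, c v = false ∧ b = y v ∧ a = v))))
    -- the graph `G'` obtained from `G` by deleting the component `C` and adding `H`
    (G' : FinGraph U)
    (hG'verts : G'.verts = (G.verts \ C) ∪ H.verts)
    (hG'adj : ∀ a b : U, G'.G.Adj a b ↔
      ((G.G.Adj a b ∧ a ∉ C ∧ b ∉ C) ∨ H.G.Adj a b)) :
    Bip G.G S = Bip G'.G S := by
  obtain ⟨v₀, hv₀, hCdef⟩ := hC
  have hCmem : ∀ u, u ∈ C ↔ u ∈ G.verts ∧ G.G.Reachable v₀ u := by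
    intro u; rw [hCdef]; simp [Finset.mem_filter]
  have hCclosed : ∀ ⦃u v⦄, u ∈ C → G.G.Adj u v → v ∈ C := by
    intro u v hu hadj
    rw [hCmem] at hu ⊢
    exact ⟨(G.support hadj).2, hu.2.trans hadj.reachable⟩
  have hv₀C : v₀ ∈ C := (hCmem v₀).2 ⟨hv₀, SimpleGraph.Reachable.refl v₀⟩
  ext S'
  constructor
  · rintro ⟨hS'S, d, hd, hd1, hd0⟩
    refine ⟨hS'S, ?_⟩
    set fb : Bool := xor (d v₀) (c v₀) with hfb
    have key : ∀ v ∈ C, d v = xor fb (c v) := by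
      intro v hv
      obtain ⟨p⟩ := ((hCmem v).1 hv).2
      have := aux_walk_parity G.G C d c hCclosed hd hc v₀ v p hv₀C
      rw [hfb, this, aux_bool1]
    set P : U → Prop := fun u => ∃ v, v ∈ S ∩ C ∧ c v = false ∧ u = y v with hP
    set d' : U → Bool := fun u => if u = x then fb else if P u then !fb else d u with hd'def
    have hd'G : ∀ u ∈ G.verts, d' u = d u := by
      intro u hu
      have h1 : u ≠ x := fun h => hx (h ▸ hu)
      have h2 : ¬ P u := by
        rintro ⟨v, hv, hcv, rfl⟩
        exact (hy v hv hcv).1 hu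
      simp only [hd'def, if_neg h1, if_neg h2]
    have hd'x : d' x = fb := by simp only [hd'def, if_pos rfl]
    have hd'y : ∀ v ∈ S ∩ C, c v = false → d' (y v) = !fb := by
      intro v hv hcv
      have h1 : y v ≠ x := (hy v hv hcv).2
      have h2 : P (y v) := ⟨v, hv, hcv, rfl⟩
      simp only [hd'def, if_neg h1, if_pos h2]
    refine ⟨d', ?_, ?_, ?_⟩
    · intro a b hab
      rw [hG'adj] at hab
      have hSCv : ∀ v ∈ S ∩ C, v ∈ G.verts := by
        intro v hv; exact hS (Finset.mem_inter.1 hv).1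
      have hSCC : ∀ v ∈ S ∩ C, v ∈ C := fun v hv => (Finset.mem_inter.1 hv).2
      rcases hab with ⟨hab, ha, hb⟩ | hab
      · rw [hd'G a (G.support hab).1, hd'G b (G.support hab).2]
        exact hd hab
      · rw [hHadj] at hab
        obtain ⟨hne, hcase⟩ := hab
        have main : ∀ a b : U,
            ((a = x ∧ b ∈ S ∩ C ∧ c b = true) ∨
            (∃ v ∈ S ∩ C, c v = false ∧ a = x ∧ b = y v) ∨
            (∃ v ∈ S ∩ C, c v = false ∧ a = y v ∧ b = v)) → d' a ≠ d' b := by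
          rintro a b (⟨rfl, hb, hcb⟩ | ⟨v, hv, hcv, rfl, rfl⟩ | ⟨v, hv, hcv, rfl, hbv⟩)
          · rw [hd'x, hd'G b (hSCv b hb), key b (hSCC b hb), hcb]
            exact aux_bool2 fb
          · rw [hd'x, hd'y v hv hcv]
            exact aux_bool3 fb
          · rw [hbv, hd'y v hv hcv, hd'G v (hSCv v hv), key v (hSCC v hv), hcv]
            exact aux_bool4 fb
        rcases hcase with h | h
        · exact main a b h
        · exact (main b a h).symm
    · intro v hv
      rw [hd'G v (hS (hS'S hv))]
      exact hd1 v hv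
    · intro v hv
      rw [hd'G v (hS (Finset.mem_sdiff.1 hv).1)]
      exact hd0 v hv
  · rintro ⟨hS'S, d', hd', hd'1, hd'0⟩
    refine ⟨hS'S, ?_⟩
    have hSC : ∀ v ∈ S ∩ C, d' v = xor (d' x) (c v) := by
      intro v hv
      have hvG : v ∈ G.verts := hS (Finset.mem_inter.1 hv).1
      have hvx : v ≠ x := fun h => hx (h ▸ hvG)
      cases hcv : c v with
      | true =>
        have hadj : G'.G.Adj x v := by
          rw [hG'adj, hHadj]
          exact Or.inr ⟨fun h => hvx h.symm, Or.inl (Or.inl ⟨rfl, hv, hcv⟩)⟩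
        rw [aux_ne_not _ _ (hd' hadj), Bool.xor_true]
      | false =>
        have hyv := hy v hv hcv
        have h1 : G'.G.Adj x (y v) := by
          rw [hG'adj, hHadj]
          exact Or.inr ⟨fun h => hyv.2 h.symm, Or.inl (Or.inr (Or.inl ⟨v, hv, hcv, rfl, rfl⟩))⟩
        have h2 : G'.G.Adj (y v) v := by
          rw [hG'adj, hHadj]
          exact Or.inr ⟨fun h => hyv.1 (by rw [h]; exact hvG), Or.inl (Or.inr (Or.inr ⟨v, hv, hcv, rfl, rfl⟩))⟩
        rw [aux_ne_not _ _ (hd' h2), aux_ne_not _ _ (hd' h1),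
          Bool.not_not, Bool.xor_false]
    set d : U → Bool := fun u => if u ∈ C then xor (d' x) (c u) else d' u with hddef
    have hdC : ∀ u ∈ C, d u = xor (d' x) (c u) := by
      intro u hu; simp only [hddef, if_pos hu]
    have hdnC : ∀ u, u ∉ C → d u = d' u := by
      intro u hu; simp only [hddef, if_neg hu]
    refine ⟨d, ?_, ?_, ?_⟩
    · intro u v hadj
      by_cases hu : u ∈ C
      · have hvC : v ∈ C := hCclosed hu hadj
        rw [hdC u hu, hdC v hvC, aux_ne_not _ _ (hc hu hvC hadj)]
        exact aux_bool5 _ _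
      · have hvC : v ∉ C := fun h => hu (hCclosed h hadj.symm)
        rw [hdnC u hu, hdnC v hvC]
        exact hd' ((hG'adj u v).2 (Or.inl ⟨hadj, hu, hvC⟩))
    · intro v hv
      by_cases hvC : v ∈ C
      · rw [hdC v hvC, ← hSC v (Finset.mem_inter.2 ⟨hS'S hv, hvC⟩)]
        exact hd'1 v hv
      · rw [hdnC v hvC]; exact hd'1 v hv
    · intro v hv
      by_cases hvC : v ∈ C
      · rw [hdC v hvC, ← hSC v (Finset.mem_inter.2 ⟨(Finset.mem_sdiff.1 hv).1, hvC⟩)]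
        exact hd'0 v hv
      · rw [hdnC v hvC]; exact hd'0 v hv
end

section
/- Let G be a finite simple graph and S ⊆ V(G), and let ∂(S) denote the boundary of S in G, i.e., the set of vertices of S having a neighbor in V(G) ∖ S. Let H be a finite simple graph with V(H) ∩ V(G) = ∂(S) such that B_{G[S]}(∂(S)) = B_H(∂(S)). Let G' be the graph obtained from G by replacing G[S] by H, i.e., V(G') = (V(G) ∖ (S ∖ ∂(S))) ∪ V(H) and E(G') = {e ∈ E(G) : not both endpoints of e lie in S} ∪ E(H). Then: (a) for every proper 2-coloring K of G, the restriction of K to (V(G) ∖ S) ∪ ∂(S) extends to a proper 2-coloring of G'; and (b) for every proper 2-coloring K' of G', the restriction of K' to (V(G) ∖ S) ∪ ∂(S) extends to a proper 2-coloring of G. -/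
/-!
A proper 2-coloring of one side restricts to a bipartition of `∂(S)` realised inside `S` (by `G[S]`
or by `H`); the hypothesis `B_{G[S]}(∂(S)) = B_H(∂(S))` provides a proper coloring of the other
piece with the same values on `∂(S)`. Since the two pieces meet the rest of the graph only in
`∂(S)`, pasting that coloring onto the old one outside the piece gives the required extension.
-/

open scoped Classical

/-- The restriction (induced subgraph) of a `SimpleGraph` to a finite vertex set. -/
def SimpleGraph.restrictTo {U : Type} (G : SimpleGraph U) (s : Finset U) : SimpleGraph U where
  Adj u v := G.Adj u v ∧ u ∈ s ∧ v ∈ s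
  symm := ⟨fun u v h => ⟨h.1.symm, h.2.2, h.2.1⟩⟩
  loopless := ⟨fun u h => G.irrefl h.1⟩

/-- The boundary `∂(S)` of `S` in `G`: vertices of `S` with a neighbor outside `S`. -/
noncomputable def FinGraph.bdry {U : Type} [DecidableEq U] (G : FinGraph U) (S : Finset U) :
    Finset U :=
  S.filter fun v => ∃ u, G.G.Adj v u ∧ u ∉ S

variable {U : Type} [DecidableEq U]

theorem FinGraph.mem_bdry {G : FinGraph U} {S : Finset U} {v : U} :
    v ∈ G.bdry S ↔ v ∈ S ∧ ∃ u, G.G.Adj v u ∧ u ∉ S :=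
  Finset.mem_filter

theorem FinGraph.bdry_subset_verts (G : FinGraph U) (S : Finset U) : G.bdry S ⊆ G.verts := by
  intro v hv
  obtain ⟨-, u, hvu, -⟩ := FinGraph.mem_bdry.mp hv
  exact (G.support hvu).1

theorem exists_proper_eq_on_of_Bip_subset {K₁ K₂ : SimpleGraph U} {T : Finset U}
    (hK : Bip K₁ T ⊆ Bip K₂ T) {c : U → Bool} (hc : ∀ ⦃u v⦄, K₁.Adj u v → c u ≠ c v) :
    ∃ d : U → Bool, (∀ ⦃u v⦄, K₂.Adj u v → d u ≠ d v) ∧ ∀ v ∈ T, d v = c v := by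
  have hmem : T.filter (c · = true) ∈ Bip K₁ T :=
    ⟨Finset.filter_subset _ _, c, hc, fun v hv => (Finset.mem_filter.mp hv).2,
      fun v hv => by
        simp only [Finset.mem_sdiff, Finset.mem_filter, not_and, Bool.not_eq_true] at hv
        exact hv.2 hv.1⟩
  obtain ⟨-, d, hd, hd_true, hd_false⟩ := hK hmem
  refine ⟨d, hd, fun v hv => ?_⟩
  cases hcv : c v
  · exact hd_false v (by simp [hv, hcv])
  · exact hd_true v (by simp [hv, hcv])

theorem Finset.piecewise_eq_of_eq_on_inter {α : Type*} {s t : Finset U} {c d : U → α}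
    (hdc : ∀ v ∈ s ∩ t, d v = c v) {v : U} (hv : v ∈ t) : s.piecewise d c v = c v := by
  by_cases hvs : v ∈ s
  · rw [Finset.piecewise_eq_of_mem _ _ _ hvs]
    exact hdc v (Finset.mem_inter.mpr ⟨hvs, hv⟩)
  · exact Finset.piecewise_eq_of_notMem _ _ _ hvs

theorem proper_piecewise_sup (K₁ K₂ : FinGraph U) {c d : U → Bool}
    (hc : ∀ ⦃u v⦄, K₁.G.Adj u v → c u ≠ c v) (hd : ∀ ⦃u v⦄, K₂.G.Adj u v → d u ≠ d v)
    (hdc : ∀ v ∈ K₂.verts ∩ K₁.verts, d v = c v) :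
    ∀ ⦃u v⦄, (K₁.G ⊔ K₂.G).Adj u v → K₂.verts.piecewise d c u ≠ K₂.verts.piecewise d c v := by
  rintro u v (huv | huv)
  · rw [Finset.piecewise_eq_of_eq_on_inter hdc (K₁.support huv).1,
      Finset.piecewise_eq_of_eq_on_inter hdc (K₁.support huv).2]
    exact hc huv
  · rw [Finset.piecewise_eq_of_mem _ _ _ (K₂.support huv).1,
      Finset.piecewise_eq_of_mem _ _ _ (K₂.support huv).2]
    exact hd huv

theorem proper_piecewise_restrictTo (G : FinGraph U) (S : Finset U) {c d : U → Bool}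
    (hc : ∀ ⦃u v⦄, G.G.Adj u v → ¬(u ∈ S ∧ v ∈ S) → c u ≠ c v)
    (hd : ∀ ⦃u v⦄, (G.G.restrictTo S).Adj u v → d u ≠ d v)
    (hdc : ∀ v ∈ G.bdry S, d v = c v) :
    ∀ ⦃u v⦄, G.G.Adj u v → S.piecewise d c u ≠ S.piecewise d c v := by
  have hcross : ∀ ⦃u v⦄, G.G.Adj u v → v ∉ S → S.piecewise d c u = c u := by
    intro u v huv hv
    by_cases hu : u ∈ S
    · rw [Finset.piecewise_eq_of_mem _ _ _ hu]
      exact hdc u (FinGraph.mem_bdry.mpr ⟨hu, v, huv, hv⟩)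
    · exact Finset.piecewise_eq_of_notMem _ _ _ hu
  intro u v huv
  by_cases hS : u ∈ S ∧ v ∈ S
  · rw [Finset.piecewise_eq_of_mem _ _ _ hS.1, Finset.piecewise_eq_of_mem _ _ _ hS.2]
    exact hd ⟨huv, hS⟩
  · rcases not_and_or.mp hS with hu | hv
    · rw [hcross huv.symm hu, Finset.piecewise_eq_of_notMem _ _ _ hu]
      exact hc huv hS
    · rw [hcross huv hv, Finset.piecewise_eq_of_notMem _ _ _ hv]
      exact hc huv hS

theorem replace_subgraph_extending_coloring_general {U : Type} [DecidableEq U]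
    (G : FinGraph U) (S : Finset U)
    (H : FinGraph U)
    (hHG : H.verts ∩ G.verts = G.bdry S)
    (hBip : Bip (G.G.restrictTo S) (G.bdry S) = Bip H.G (G.bdry S))
    (G' : FinGraph U)
    (hG'adj : ∀ a b : U, G'.G.Adj a b ↔
      ((G.G.Adj a b ∧ ¬(a ∈ S ∧ b ∈ S)) ∨ H.G.Adj a b)) :
    (∀ c : U → Bool, (∀ ⦃u v⦄, G.G.Adj u v → c u ≠ c v) →
      ∃ c' : U → Bool, (∀ ⦃u v⦄, G'.G.Adj u v → c' u ≠ c' v) ∧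
        ∀ v ∈ (G.verts \ S) ∪ G.bdry S, c' v = c v) ∧
    (∀ c' : U → Bool, (∀ ⦃u v⦄, G'.G.Adj u v → c' u ≠ c' v) →
      ∃ c : U → Bool, (∀ ⦃u v⦄, G.G.Adj u v → c u ≠ c v) ∧
        ∀ v ∈ (G.verts \ S) ∪ G.bdry S, c v = c' v) := by
  have hkept : (G.verts \ S) ∪ G.bdry S ⊆ G.verts :=
    Finset.union_subset Finset.sdiff_subset (G.bdry_subset_verts S)
  constructor
  · intro c hc
    obtain ⟨d, hd, hdc⟩ := exists_proper_eq_on_of_Bip_subset hBip.le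
      (fun u v huv => hc huv.1)
    have hdc' : ∀ v ∈ H.verts ∩ G.verts, d v = c v := hHG ▸ hdc
    refine ⟨H.verts.piecewise d c, fun u v huv => proper_piecewise_sup G H hc hd hdc' ?_,
      fun v hv => Finset.piecewise_eq_of_eq_on_inter hdc' (hkept hv)⟩
    exact ((hG'adj u v).mp huv).imp_left And.left
  · intro c' hc'
    obtain ⟨d, hd, hdc⟩ := exists_proper_eq_on_of_Bip_subset hBip.ge
      (fun u v huv => hc' ((hG'adj u v).mpr (Or.inr huv)))
    refine ⟨S.piecewise d c', proper_piecewise_restrictTo G S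
      (fun u v huv hS => hc' ((hG'adj u v).mpr (Or.inl ⟨huv, hS⟩))) hd hdc, fun v hv => ?_⟩
    rcases Finset.mem_union.mp hv with hv | hv
    · exact Finset.piecewise_eq_of_notMem _ _ _ (Finset.mem_sdiff.mp hv).2
    · rw [Finset.piecewise_eq_of_mem _ _ _ (FinGraph.mem_bdry.mp hv).1]
      exact hdc v hv

/-- if `H` (with `V(H) ∩ V(G) = ∂(S)`) satisfies
`B_{G[S]}(∂(S)) = B_H(∂(S))`, and `G'` is obtained from `G` by replacing `G[S]` by `H`,
then proper 2-colorings of `G` and of `G'` extend each other across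
`(V(G) ∖ S) ∪ ∂(S)`. -/
theorem replace_subgraph_extending_coloring {U : Type} [DecidableEq U]
    (G : FinGraph U) (S : Finset U) (hS : S ⊆ G.verts)
    (H : FinGraph U)
    (hHG : H.verts ∩ G.verts = G.bdry S)
    (hBip : Bip (G.G.restrictTo S) (G.bdry S) = Bip H.G (G.bdry S))
    (G' : FinGraph U)
    (hG'verts : G'.verts = (G.verts \ (S \ G.bdry S)) ∪ H.verts)
    (hG'adj : ∀ a b : U, G'.G.Adj a b ↔
      ((G.G.Adj a b ∧ ¬(a ∈ S ∧ b ∈ S)) ∨ H.G.Adj a b)) :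
    (∀ c : U → Bool, (∀ ⦃u v⦄, G.G.Adj u v → c u ≠ c v) →
      ∃ c' : U → Bool, (∀ ⦃u v⦄, G'.G.Adj u v → c' u ≠ c' v) ∧
        ∀ v ∈ (G.verts \ S) ∪ G.bdry S, c' v = c v) ∧
    (∀ c' : U → Bool, (∀ ⦃u v⦄, G'.G.Adj u v → c' u ≠ c' v) →
      ∃ c : U → Bool, (∀ ⦃u v⦄, G.G.Adj u v → c u ≠ c v) ∧
        ∀ v ∈ (G.verts \ S) ∪ G.bdry S, c v = c' v) :=
  replace_subgraph_extending_coloring_general G S H hHG hBip G' hG'adj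
end

section
/- Let G be a finite connected simple graph with an injective edge-weight function w : E(G) → ℝ, and let T be a minimum spanning tree of G, i.e., a connected spanning subgraph of G with no cycles minimizing the total edge weight among all such subgraphs. Then for all vertices u, v of G and every real t: G contains a u–v path all of whose edges have weight less than t if and only if T contains a u–v path all of whose edges have weight less than t. -/
/-!
If some edge `e` on the `T`-path from `u` to `v` had weight at least `t`, then, since `T` is
acyclic, deleting `e` separates `u` from `v`, so the light `G`-walk from `u` to `v` crosses the
cut at an edge `f` with `w f < t ≤ w e`. Exchanging `e` for `f` gives a spanning tree lighter
than `T`.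
-/

open scoped Classical

lemma finsum_mem_insert_sdiff_singleton_add {α M : Type*} [AddCommMonoid M] {s : Set α}
    (hs : s.Finite) (w : α → M) {e f : α} (he : e ∈ s) (hf : f ∉ s \ {e}) :
    (∑ᶠ i ∈ insert f (s \ {e}), w i) + w e = (∑ᶠ i ∈ s, w i) + w f := by
  rw [finsum_mem_insert w hf hs.sdiff, ← finsum_mem_add_sdiff (Set.singleton_subset_iff.2 he) hs,
    finsum_mem_singleton]
  abel

namespace SimpleGraph

variable {V : Type*} {G H T : SimpleGraph V} {u v x y a b : V}

lemma Connected.reachable_deleteEdges_or (hG : G.Connected) (x y z : V) :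
    (G.deleteEdges {s(x, y)}).Reachable z x ∨ (G.deleteEdges {s(x, y)}).Reachable z y := by
  obtain ⟨P, hP⟩ := (hG z x).exists_isPath
  by_cases hxyP : s(x, y) ∈ P.edges
  · have hyP := P.snd_mem_support_of_mem_edges hxyP
    have hxP₁ := Walk.endpoint_notMem_support_takeUntil hP hyP (P.adj_of_mem_edges hxyP).ne
    refine .inr ⟨(P.takeUntil y hyP).toDeleteEdges _ fun e he ↦ ?_⟩
    rintro rfl
    exact hxP₁ ((P.takeUntil y hyP).fst_mem_support_of_mem_edges he)
  · exact .inl ⟨P.toDeleteEdges _ fun e he ↦ by rintro rfl; exact hxyP he⟩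

lemma Connected.connected_deleteEdges_sup_edge_of_not_reachable (hG : G.Connected)
    (hab : ¬(G.deleteEdges {s(x, y)}).Reachable a b) :
    (G.deleteEdges {s(x, y)} ⊔ edge a b).Connected := by
  set G' := G.deleteEdges {s(x, y)}
  have hle : G' ≤ G' ⊔ edge a b := le_sup_left
  have hab' : (G' ⊔ edge a b).Reachable a b := by
    refine Adj.reachable ?_
    simp [edge_adj, (show a ≠ b by rintro rfl; exact hab .rfl)]
  have hxy : (G' ⊔ edge a b).Reachable x y := by
    rcases hG.reachable_deleteEdges_or x y a with hax | hay <;>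
      rcases hG.reachable_deleteEdges_or x y b with hbx | hby
    · exact absurd (hax.trans hbx.symm) hab
    · exact ((hax.mono hle).symm.trans hab').trans (hby.mono hle)
    · exact ((hbx.mono hle).symm.trans hab'.symm).trans (hay.mono hle)
    · exact absurd (hay.trans hby.symm) hab
  have hx : ∀ z, (G' ⊔ edge a b).Reachable z x := fun z ↦
    (hG.reachable_deleteEdges_or x y z).elim (·.mono hle) fun h ↦ (h.mono hle).trans hxy.symm
  exact (connected_iff_exists_forall_reachable _).2 ⟨x, fun z ↦ (hx z).symm⟩

lemma IsAcyclic.not_reachable_deleteEdges_of_mem_edges (hG : G.IsAcyclic) {p : G.Walk u v}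
    (hp : p.IsPath) {e : Sym2 V} (he : e ∈ p.edges) : ¬(G.deleteEdges {e}).Reachable u v := by
  rintro ⟨r⟩
  have hr := r.toPath.property.mapLe (deleteEdges_le {e})
  have hrp : r.toPath.val.mapLe (deleteEdges_le {e}) = p :=
    congrArg Subtype.val ((hG.subsingleton_path u v).elim ⟨_, hr⟩ ⟨p, hp⟩)
  rw [← hrp, Walk.edges_mapLe_eq_edges] at he
  simpa using r.toPath.val.edges_subset_edgeSet he

lemma Walk.exists_mem_edges_not_reachable (p : G.Walk u v) (huv : ¬H.Reachable u v) :
    ∃ a b, s(a, b) ∈ p.edges ∧ ¬H.Reachable a b := by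
  obtain ⟨d, hd, hfst, hsnd⟩ := p.exists_boundary_dart {z | H.Reachable u z} .rfl huv
  exact ⟨d.fst, d.snd, List.mem_map_of_mem hd, fun h ↦ hsnd (hfst.trans h)⟩

structure IsMinSpanningTree (G : SimpleGraph V) (w : Sym2 V → ℝ) (T : SimpleGraph V) : Prop where
  le : T ≤ G
  connected : T.Connected
  isAcyclic : T.IsAcyclic
  weight_le : ∀ T' : SimpleGraph V, T' ≤ G → T'.Connected → T'.IsAcyclic →
    (∑ᶠ e ∈ T.edgeSet, w e) ≤ ∑ᶠ e ∈ T'.edgeSet, w e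

theorem IsMinSpanningTree.weight_le_of_not_reachable_deleteEdges [Finite V]
    {w : Sym2 V → ℝ} (hT : G.IsMinSpanningTree w T) (hxy : T.Adj x y) (hab : G.Adj a b)
    (hsep : ¬(T.deleteEdges {s(x, y)}).Reachable a b) : w s(x, y) ≤ w s(a, b) := by
  set T' := T.deleteEdges {s(x, y)} ⊔ edge a b
  have hT'le : T' ≤ G := sup_le ((deleteEdges_le _).trans hT.le) ((edge_le_iff G).2 (.inr hab))
  have hT'edges : T'.edgeSet = insert s(a, b) (T.edgeSet \ {s(x, y)}) := by
    rw [edgeSet_sup, edgeSet_deleteEdges, edgeSet_edge_of_ne hab.ne, Set.union_singleton]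
  have hab_new : s(a, b) ∉ T.edgeSet \ {s(x, y)} := fun h ↦
    hsep (Adj.reachable (by rwa [← mem_edgeSet, edgeSet_deleteEdges]))
  have hmin := hT.weight_le T' hT'le (hT.connected.connected_deleteEdges_sup_edge_of_not_reachable hsep)
    ((hT.isAcyclic.anti (deleteEdges_le _)).sup_edge_of_not_reachable hsep)
  have hexchange := finsum_mem_insert_sdiff_singleton_add (Set.toFinite T.edgeSet) w hxy hab_new
  rw [← hT'edges] at hexchange
  linarith

theorem IsMinSpanningTree.exists_isPath_forall_lt_of_walk [Finite V] {w : Sym2 V → ℝ}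
    (hT : G.IsMinSpanningTree w T) {t : ℝ} (p : G.Walk u v) (hpt : ∀ e ∈ p.edges, w e < t) :
    ∃ q : T.Walk u v, q.IsPath ∧ ∀ e ∈ q.edges, w e < t := by
  obtain ⟨q, hq⟩ := (hT.connected u v).exists_isPath
  refine ⟨q, hq, fun e he ↦ ?_⟩
  induction e with | h x y =>
  obtain ⟨a, b, hab, hsep⟩ := p.exists_mem_edges_not_reachable
    (hT.isAcyclic.not_reachable_deleteEdges_of_mem_edges hq he)
  exact (hT.weight_le_of_not_reachable_deleteEdges (q.adj_of_mem_edges he)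
    (p.adj_of_mem_edges hab) hsep).trans_lt (hpt _ hab)

end SimpleGraph

theorem mst_preserves_bottleneck_paths_general {V : Type} [Fintype V]
    (G : SimpleGraph V)
    (w : Sym2 V → ℝ)
    (T : SimpleGraph V) (hTle : T ≤ G) (hTconn : T.Connected) (hTacyc : T.IsAcyclic)
    (hTmin : ∀ T' : SimpleGraph V, T' ≤ G → T'.Connected → T'.IsAcyclic →
      (∑ᶠ e ∈ T.edgeSet, w e) ≤ ∑ᶠ e ∈ T'.edgeSet, w e)
    (u v : V) (t : ℝ) :
    (∃ p : G.Walk u v, p.IsPath ∧ ∀ e ∈ p.edges, w e < t) ↔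
      (∃ p : T.Walk u v, p.IsPath ∧ ∀ e ∈ p.edges, w e < t) := by
  have hT : G.IsMinSpanningTree w T := ⟨hTle, hTconn, hTacyc, hTmin⟩
  refine ⟨fun ⟨p, _, hpt⟩ ↦ hT.exists_isPath_forall_lt_of_walk p hpt,
    fun ⟨p, hp, hpt⟩ ↦ ⟨p.mapLe hTle, hp.mapLe hTle, ?_⟩⟩
  simpa using hpt

/-- if `T` is a minimum spanning tree of a connected weighted graph `G` with
injective edge weights, then for all vertices `u`, `v` and every threshold `t`, `G` has a
`u`–`v` path all of whose edges weigh less than `t` iff `T` has one. -/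
theorem mst_preserves_bottleneck_paths {V : Type} [Fintype V] [DecidableEq V]
    (G : SimpleGraph V) (hG : G.Connected)
    (w : Sym2 V → ℝ)
    (hinj : ∀ e ∈ G.edgeSet, ∀ e' ∈ G.edgeSet, w e = w e' → e = e')
    (T : SimpleGraph V) (hTle : T ≤ G) (hTconn : T.Connected) (hTacyc : T.IsAcyclic)
    (hTmin : ∀ T' : SimpleGraph V, T' ≤ G → T'.Connected → T'.IsAcyclic →
      (∑ᶠ e ∈ T.edgeSet, w e) ≤ ∑ᶠ e ∈ T'.edgeSet, w e)
    (u v : V) (t : ℝ) :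
    (∃ p : G.Walk u v, p.IsPath ∧ ∀ e ∈ p.edges, w e < t) ↔
      (∃ p : T.Walk u v, p.IsPath ∧ ∀ e ∈ p.edges, w e < t) :=
  mst_preserves_bottleneck_paths_general G w T hTle hTconn hTacyc hTmin u v t
end

section
/- Let G be a finite simple graph with edge weights w : E(G) → ℝ and S ⊆ V(G). Let v₁, v₂, …, v_k (k ≥ 3) be distinct vertices forming a path in G (so v_i v_{i+1} ∈ E(G) for 1 ≤ i < k) such that each internal vertex v₂, …, v_{k−1} has degree exactly 2 in G and does not belong to S, and such that v₁ v_k ∉ E(G). Let G' be the weighted graph obtained from G by deleting v₂, …, v_{k−1} (and all edges incident to them) and adding the edge v₁ v_k with weight equal to the maximum of the weights w(v_i v_{i+1}) for 1 ≤ i < k. Then for all u, v ∈ S and every real t: G contains a u–v path all of whose edges have weight less than t if and only if G' contains such a path. -/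
/-!
Pass to the subgraphs of edges of weight `< t`. A light edge of `G'` is either an old light edge
of `G` or the new edge; the new edge is light exactly when every edge of the contracted path is,
and then the path itself joins its ends in `G`. Conversely, a `u`–`u'` path in `G` that enters
the interior of the contracted path must run along it, since interior vertices have degree 2; so
collapsing each interior vertex to the end of the path on its side of a heaviest path edge maps
light edges of `G` to light walks of `G'`, and fixes `u` and `u'`, which lie in `S`.
-/

open scoped Classical

/-- `G` contains a `u`–`v` path all of whose edges have weight (under `w`) less than `t`. -/
def BottleneckConn {U : Type} (G : SimpleGraph U) (w : Sym2 U → ℝ) (u v : U) (t : ℝ) : Prop :=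
  ∃ p : G.Walk u v, p.IsPath ∧ ∀ e ∈ p.edges, w e < t

namespace SimpleGraph

variable {V W : Type*}

def weightBelow (G : SimpleGraph V) (w : Sym2 V → ℝ) (t : ℝ) : SimpleGraph V where
  Adj a b := G.Adj a b ∧ w s(a, b) < t
  symm := ⟨fun a b h => ⟨h.1.symm, by rw [Sym2.eq_swap]; exact h.2⟩⟩
  loopless := ⟨fun a h => G.loopless.irrefl a h.1⟩

theorem mem_edgeSet_weightBelow {G : SimpleGraph V} {w : Sym2 V → ℝ} {t : ℝ} {e : Sym2 V} :
    e ∈ (G.weightBelow w t).edgeSet ↔ e ∈ G.edgeSet ∧ w e < t := by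
  induction e using Sym2.ind with
  | _ a b => exact Iff.rfl

theorem Adj.sym2_ne_of_not_adj {G : SimpleGraph V} {a b x y : V} (hab : G.Adj a b)
    (hxy : ¬ G.Adj x y) : s(a, b) ≠ s(x, y) :=
  fun h => hxy (by rwa [← mem_edgeSet, ← h])

theorem Reachable.lift {G : SimpleGraph V} {H : SimpleGraph W} (f : V → W)
    (hf : ∀ a b, G.Adj a b → H.Reachable (f a) (f b)) {a b : V} (h : G.Reachable a b) :
    H.Reachable (f a) (f b) := by
  rw [reachable_iff_reflTransGen] at h ⊢
  exact h.lift' f fun a b hab => (reachable_iff_reflTransGen _ _).1 (hf a b hab)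

theorem reachable_of_adj_succ {G : SimpleGraph V} {v : ℕ → V} {n : ℕ}
    (h : ∀ i < n, G.Adj (v i) (v (i + 1))) : G.Reachable (v 0) (v n) := by
  induction n with
  | zero => rfl
  | succ n ih => exact (ih fun i hi => h i (by omega)).trans (h n n.lt_succ_self).reachable

theorem neighborSet_eq_pair_of_ncard_eq_two {G : SimpleGraph V} {x a b : V}
    (h : (G.neighborSet x).ncard = 2) (ha : G.Adj x a) (hb : G.Adj x b) (hab : a ≠ b) :
    G.neighborSet x = {a, b} :=
  (Set.eq_of_subset_of_ncard_le (t := G.neighborSet x)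
    (Set.insert_subset ha (Set.singleton_subset_iff.2 hb)) (by rw [h, Set.ncard_pair hab])
    (Set.finite_of_ncard_ne_zero (by rw [h]; norm_num))).symm

end SimpleGraph

open SimpleGraph

theorem bottleneckConn_iff_reachable_weightBelow {U : Type} (G : SimpleGraph U)
    (w : Sym2 U → ℝ) (u v : U) (t : ℝ) :
    BottleneckConn G w u v t ↔ (G.weightBelow w t).Reachable u v := by
  constructor
  · rintro ⟨p, -, hp⟩
    exact ⟨p.transfer _ fun e he =>
      mem_edgeSet_weightBelow.2 ⟨p.edges_subset_edgeSet he, hp e he⟩⟩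
  · rintro ⟨q⟩
    have hsub : ∀ e ∈ q.toPath.1.edges, e ∈ G.edgeSet := fun e he =>
      (mem_edgeSet_weightBelow.1 (q.toPath.1.edges_subset_edgeSet he)).1
    refine ⟨q.toPath.1.transfer G hsub, q.toPath.2.transfer hsub, fun e he => ?_⟩
    rw [Walk.edges_transfer] at he
    exact (mem_edgeSet_weightBelow.1 (Walk.edges_subset_edgeSet _ he)).2

section IsolatedPath

variable {U : Type} {G G' : SimpleGraph U} {w w' : Sym2 U → ℝ} {k j : ℕ} {v : ℕ → U} {t : ℝ}

def ContractsPath (G G' : SimpleGraph U) (v : ℕ → U) (k : ℕ) : Prop :=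
  ∀ a b : U, G'.Adj a b ↔
    ((G.Adj a b ∧ ∀ i, 0 < i → i < k - 1 → a ≠ v i ∧ b ≠ v i) ∨
      (a = v 0 ∧ b = v (k - 1)) ∨ (a = v (k - 1) ∧ b = v 0))

theorem eq_or_eq_of_adj_interior (hinj : Set.InjOn v (Set.Iio k))
    (hpath : ∀ i, i + 1 < k → G.Adj (v i) (v (i + 1))) {m : ℕ} (hm : m + 2 < k)
    (hdeg : (G.neighborSet (v (m + 1))).ncard = 2) {b : U} (hb : G.Adj (v (m + 1)) b) :
    b = v m ∨ b = v (m + 2) := by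
  have hne : v m ≠ v (m + 2) := fun h => by
    have := hinj (show m < k by omega) (show m + 2 < k from hm) h
    omega
  have hnbr := G.neighborSet_eq_pair_of_ncard_eq_two hdeg (hpath m (by omega)).symm
    (hpath (m + 1) hm) hne
  simpa [hnbr] using (show b ∈ G.neighborSet (v (m + 1)) from hb)

noncomputable def collapse (v : ℕ → U) (k j : ℕ) (a : U) : U :=
  if a ∈ v '' Set.Iic j then v 0 else if a ∈ v '' Set.Ioo j k then v (k - 1) else a

theorem collapse_apply (hinj : Set.InjOn v (Set.Iio k)) (hj : j < k) {i : ℕ} (hi : i < k) :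
    collapse v k j (v i) = if i ≤ j then v 0 else v (k - 1) := by
  by_cases hij : i ≤ j
  · rw [if_pos hij, collapse, if_pos ⟨i, hij, rfl⟩]
  · have hnot : v i ∉ v '' Set.Iic j := fun h =>
      hij ((hinj.mem_image_iff (Set.Iic_subset_Iio.2 hj) hi).1 h)
    rw [collapse, if_neg hnot, if_pos ⟨i, ⟨by omega, hi⟩, rfl⟩, if_neg hij]

theorem collapse_of_notMem (hj : j + 1 < k) {a : U} (ha : a ∉ v '' Set.Ioo 0 (k - 1)) :
    collapse v k j a = a := by
  unfold collapse
  split_ifs with hleft hright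
  · obtain ⟨i, hi, rfl⟩ := hleft
    obtain rfl : i = 0 := by
      by_contra h
      exact ha ⟨i, ⟨by omega, by simp only [Set.mem_Iic] at hi; omega⟩, rfl⟩
    rfl
  · obtain ⟨i, ⟨hi1, hi2⟩, rfl⟩ := hright
    obtain rfl : i = k - 1 := by
      by_contra h
      exact ha ⟨i, ⟨by omega, by omega⟩, rfl⟩
    rfl
  · rfl

theorem reachable_collapse_of_light_edge (hinj : Set.InjOn v (Set.Iio k))
    (hnew : G'.Adj (v 0) (v (k - 1))) (hj : j + 1 < k)
    (hjw : w' s(v 0, v (k - 1)) = w s(v j, v (j + 1))) {m : ℕ} (hm : m + 1 < k)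
    (hw : w s(v m, v (m + 1)) < t) :
    (G'.weightBelow w' t).Reachable (collapse v k j (v m)) (collapse v k j (v (m + 1))) := by
  rw [collapse_apply hinj (by omega) (by omega), collapse_apply hinj (by omega) hm]
  rcases lt_trichotomy m j with h | rfl | h
  · rw [if_pos h.le, if_pos (by omega)]
  · rw [if_pos le_rfl, if_neg (by omega)]
    exact Adj.reachable ⟨hnew, hjw ▸ hw⟩
  · rw [if_neg (by omega), if_neg (by omega)]

theorem reachable_collapse_of_adj_interior (hinj : Set.InjOn v (Set.Iio k))
    (hpath : ∀ i, i + 1 < k → G.Adj (v i) (v (i + 1))) (hnew : G'.Adj (v 0) (v (k - 1)))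
    (hj : j + 1 < k) (hjw : w' s(v 0, v (k - 1)) = w s(v j, v (j + 1))) {m : ℕ}
    (hm : m + 2 < k) (hdeg : (G.neighborSet (v (m + 1))).ncard = 2) {b : U}
    (hb : (G.weightBelow w t).Adj (v (m + 1)) b) :
    (G'.weightBelow w' t).Reachable (collapse v k j (v (m + 1))) (collapse v k j b) := by
  rcases eq_or_eq_of_adj_interior hinj hpath hm hdeg hb.1 with rfl | rfl
  · refine (reachable_collapse_of_light_edge hinj hnew hj hjw (by omega) ?_).symm
    rw [Sym2.eq_swap]
    exact hb.2
  · exact reachable_collapse_of_light_edge hinj hnew hj hjw hm hb.2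

namespace ContractsPath

theorem weightBelow_adj (hG' : ContractsPath G G' v k) (hnoedge : ¬ G.Adj (v 0) (v (k - 1)))
    (hw'old : ∀ e ∈ G'.edgeSet, e ≠ s(v 0, v (k - 1)) → w' e = w e) {a b : U}
    (ha : a ∉ v '' Set.Ioo 0 (k - 1)) (hb : b ∉ v '' Set.Ioo 0 (k - 1))
    (hab : (G.weightBelow w t).Adj a b) : (G'.weightBelow w' t).Adj a b := by
  have hG'ab : G'.Adj a b := (hG' a b).2 (Or.inl ⟨hab.1, fun i h1 h2 =>
    ⟨fun h => ha ⟨i, ⟨h1, h2⟩, h.symm⟩, fun h => hb ⟨i, ⟨h1, h2⟩, h.symm⟩⟩⟩)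
  refine ⟨hG'ab, ?_⟩
  rw [hw'old _ hG'ab (hab.1.sym2_ne_of_not_adj hnoedge)]
  exact hab.2

theorem reachable_collapse_of_weightBelow_adj (hG' : ContractsPath G G' v k)
    (hinj : Set.InjOn v (Set.Iio k)) (hpath : ∀ i, i + 1 < k → G.Adj (v i) (v (i + 1)))
    (hdeg : ∀ i, 0 < i → i < k - 1 → (G.neighborSet (v i)).ncard = 2)
    (hnoedge : ¬ G.Adj (v 0) (v (k - 1)))
    (hw'old : ∀ e ∈ G'.edgeSet, e ≠ s(v 0, v (k - 1)) → w' e = w e) (hj : j + 1 < k)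
    (hjw : w' s(v 0, v (k - 1)) = w s(v j, v (j + 1))) {a b : U}
    (hab : (G.weightBelow w t).Adj a b) :
    (G'.weightBelow w' t).Reachable (collapse v k j a) (collapse v k j b) := by
  have hnew : G'.Adj (v 0) (v (k - 1)) := (hG' _ _).2 (Or.inr (Or.inl ⟨rfl, rfl⟩))
  have hinterior : ∀ {a b : U}, a ∈ v '' Set.Ioo 0 (k - 1) → (G.weightBelow w t).Adj a b →
      (G'.weightBelow w' t).Reachable (collapse v k j a) (collapse v k j b) := by
    rintro a b ⟨i, ⟨hi0, hik⟩, rfl⟩ hab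
    obtain ⟨m, rfl⟩ : ∃ m, i = m + 1 := ⟨i - 1, by omega⟩
    exact reachable_collapse_of_adj_interior hinj hpath hnew hj hjw (by omega)
      (hdeg _ hi0 hik) hab
  by_cases ha : a ∈ v '' Set.Ioo 0 (k - 1)
  · exact hinterior ha hab
  by_cases hb : b ∈ v '' Set.Ioo 0 (k - 1)
  · exact (hinterior hb hab.symm).symm
  rw [collapse_of_notMem hj ha, collapse_of_notMem hj hb]
  exact (hG'.weightBelow_adj hnoedge hw'old ha hb hab).reachable

theorem reachable_of_weightBelow_adj (hG' : ContractsPath G G' v k)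
    (hpath : ∀ i, i + 1 < k → G.Adj (v i) (v (i + 1))) (hnoedge : ¬ G.Adj (v 0) (v (k - 1)))
    (hw'max : ∀ i, i + 1 < k → w s(v i, v (i + 1)) ≤ w' s(v 0, v (k - 1)))
    (hw'old : ∀ e ∈ G'.edgeSet, e ≠ s(v 0, v (k - 1)) → w' e = w e) {a b : U}
    (hab : (G'.weightBelow w' t).Adj a b) : (G.weightBelow w t).Reachable a b := by
  have hchain (hlt : w' s(v 0, v (k - 1)) < t) : (G.weightBelow w t).Reachable (v 0) (v (k - 1)) :=
    reachable_of_adj_succ fun i hi => ⟨hpath i (by omega), (hw'max i (by omega)).trans_lt hlt⟩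
  rcases (hG' a b).1 hab.1 with ⟨hGab, -⟩ | ⟨rfl, rfl⟩ | ⟨rfl, rfl⟩
  · refine Adj.reachable ⟨hGab, ?_⟩
    rw [← hw'old _ hab.1 (hGab.sym2_ne_of_not_adj hnoedge)]
    exact hab.2
  · exact hchain hab.2
  · refine (hchain ?_).symm
    rw [Sym2.eq_swap]
    exact hab.2

end ContractsPath

end IsolatedPath

theorem contract_isolated_path_keeps_bottleneck_general {U : Type}
    (G : FinGraph U) (w : Sym2 U → ℝ) (S : Finset U)
    (k : ℕ) (v : ℕ → U)
    (hinj : ∀ i < k, ∀ j < k, v i = v j → i = j)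
    (hpath : ∀ i, i + 1 < k → G.G.Adj (v i) (v (i + 1)))
    (hdeg : ∀ i, 0 < i → i < k - 1 → (G.G.neighborSet (v i)).ncard = 2)
    (hnotS : ∀ i, 0 < i → i < k - 1 → v i ∉ S)
    (hnoedge : ¬ G.G.Adj (v 0) (v (k - 1)))
    (G' : FinGraph U) (w' : Sym2 U → ℝ)
    (hG'adj : ∀ a b : U, G'.G.Adj a b ↔
      ((G.G.Adj a b ∧ ∀ i, 0 < i → i < k - 1 → a ≠ v i ∧ b ≠ v i) ∨
        (a = v 0 ∧ b = v (k - 1)) ∨ (a = v (k - 1) ∧ b = v 0)))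
    -- the new edge carries the maximum of the weights of the contracted path's edges
    (hw'new : ∃ j, j + 1 < k ∧ w' s(v 0, v (k - 1)) = w s(v j, v (j + 1)) ∧
      ∀ i, i + 1 < k → w s(v i, v (i + 1)) ≤ w' s(v 0, v (k - 1)))
    -- all other edges keep their weights
    (hw'old : ∀ e ∈ G'.G.edgeSet, e ≠ s(v 0, v (k - 1)) → w' e = w e)
    (u u' : U) (hu : u ∈ S) (hu' : u' ∈ S) (t : ℝ) :
    BottleneckConn G.G w u u' t ↔ BottleneckConn G'.G w' u u' t := by
  obtain ⟨j, hj, hjw, hw'max⟩ := hw'new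
  have hG' : ContractsPath G.G G'.G v k := hG'adj
  have hinj' : Set.InjOn v (Set.Iio k) := fun i hi i' hi' => hinj i hi i' hi'
  have hS : ∀ x ∈ S, x ∉ v '' Set.Ioo 0 (k - 1) := by
    rintro x hx ⟨i, ⟨h1, h2⟩, rfl⟩
    exact hnotS i h1 h2 hx
  rw [bottleneckConn_iff_reachable_weightBelow, bottleneckConn_iff_reachable_weightBelow]
  constructor
  · intro h
    have := h.lift (collapse v k j) fun a b =>
      hG'.reachable_collapse_of_weightBelow_adj hinj' hpath hdeg hnoedge hw'old hj hjw
    rwa [collapse_of_notMem hj (hS u hu), collapse_of_notMem hj (hS u' hu')] at this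
  · exact Reachable.lift id fun a b => hG'.reachable_of_weightBelow_adj hpath hnoedge hw'max hw'old

/-- contracting an isolated path `v 0, v 1, …, v (k-1)` (internal vertices of
degree 2 and outside `S`, `v 0` and `v (k-1)` non-adjacent) into a single edge whose
weight is the maximum weight of the path's edges preserves, for all `u, u' ∈ S` and all
thresholds `t`, the existence of a `u`–`u'` path with all edge weights `< t`. -/
theorem contract_isolated_path_keeps_bottleneck {U : Type} [DecidableEq U]
    (G : FinGraph U) (w : Sym2 U → ℝ) (S : Finset U) (hS : S ⊆ G.verts)
    (k : ℕ) (hk : 3 ≤ k) (v : ℕ → U)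
    (hinj : ∀ i < k, ∀ j < k, v i = v j → i = j)
    (hpath : ∀ i, i + 1 < k → G.G.Adj (v i) (v (i + 1)))
    (hdeg : ∀ i, 0 < i → i < k - 1 → (G.G.neighborSet (v i)).ncard = 2)
    (hnotS : ∀ i, 0 < i → i < k - 1 → v i ∉ S)
    (hnoedge : ¬ G.G.Adj (v 0) (v (k - 1)))
    (G' : FinGraph U) (w' : Sym2 U → ℝ)
    (hG'verts : G'.verts =
      G.verts \ ((Finset.range k).filter fun i => 0 < i ∧ i < k - 1).image v)
    (hG'adj : ∀ a b : U, G'.G.Adj a b ↔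
      ((G.G.Adj a b ∧ ∀ i, 0 < i → i < k - 1 → a ≠ v i ∧ b ≠ v i) ∨
        (a = v 0 ∧ b = v (k - 1)) ∨ (a = v (k - 1) ∧ b = v 0)))
    -- the new edge carries the maximum of the weights of the contracted path's edges
    (hw'new : ∃ j, j + 1 < k ∧ w' s(v 0, v (k - 1)) = w s(v j, v (j + 1)) ∧
      ∀ i, i + 1 < k → w s(v i, v (i + 1)) ≤ w' s(v 0, v (k - 1)))
    -- all other edges keep their weights
    (hw'old : ∀ e ∈ G'.G.edgeSet, e ≠ s(v 0, v (k - 1)) → w' e = w e)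
    (u u' : U) (hu : u ∈ S) (hu' : u' ∈ S) (t : ℝ) :
    BottleneckConn G.G w u u' t ↔ BottleneckConn G'.G w' u u' t :=
  contract_isolated_path_keeps_bottleneck_general G w S k v hinj hpath hdeg hnotS hnoedge G' w'
    hG'adj hw'new hw'old u u' hu hu' t
end

section
/- Let G be a finite simple graph with edge weights w : E(G) → ℝ and let S ⊆ V(G). Then there exists a finite simple graph H with real edge weights such that S ⊆ V(H), |V(H)| ≤ 2·max(|S|,1), and for all u, v ∈ S and every real t: G contains a u–v path all of whose edges have weight less than t if and only if H contains such a path. -/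
open scoped Classical

/-!
The complete graph on `S` in which `{u, v}` carries the bottleneck value of `u, v` in `G`
(the infimum of the thresholds `t` at which `u` and `v` are joined by a path of edges of weight
`< t`) already works. The set of such thresholds is an upper set, and it is open because a path
has finitely many edges; being bounded below by the least edge weight of the finite graph, it is
the open ray above the bottleneck value. Hence a path of `G` below `t` collapses to a single edge
of the compressed graph, and conversely each edge of a path of the compressed graph below `t`
unfolds into a path of `G` below `t`.
-/

open SimpleGraph Filter Topology

variable {U : Type}

theorem FinGraph.edgeSet_finite (G : FinGraph U) : G.G.edgeSet.Finite :=
  G.verts.sym2.finite_toSet.subset fun e he => by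
    induction e using Sym2.ind with
    | _ a b => exact Finset.mk_mem_sym2_iff.mpr (G.support he)

namespace BottleneckConn

variable {G H : SimpleGraph U} {w wH : Sym2 U → ℝ} {u v x : U} {s t : ℝ}

theorem of_walk (p : G.Walk u v) (hp : ∀ e ∈ p.edges, w e < t) : BottleneckConn G w u v t :=
  ⟨p.bypass, p.bypass_isPath, fun e he => hp e (p.edges_bypass_subset_edges he)⟩

theorem refl : BottleneckConn G w u u t := of_walk .nil (by simp)

theorem symm (h : BottleneckConn G w u v t) : BottleneckConn G w v u t := by
  obtain ⟨p, hp, hw⟩ := h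
  exact ⟨p.reverse, hp.reverse, fun e he => hw e (by simpa [Walk.edges_reverse] using he)⟩

theorem mono (h : BottleneckConn G w u v s) (hst : s ≤ t) : BottleneckConn G w u v t := by
  obtain ⟨p, hp, hw⟩ := h
  exact ⟨p, hp, fun e he => (hw e he).trans_le hst⟩

theorem trans (h₁ : BottleneckConn G w u v t) (h₂ : BottleneckConn G w v x t) :
    BottleneckConn G w u x t := by
  obtain ⟨p, -, hp⟩ := h₁
  obtain ⟨q, -, hq⟩ := h₂
  refine of_walk (p.append q) fun e he => ?_
  rw [Walk.edges_append, List.mem_append] at he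
  exact he.elim (hp e) (hq e)

theorem exists_lt (h : BottleneckConn G w u v t) : ∃ s < t, BottleneckConn G w u v s := by
  obtain ⟨p, hp, hw⟩ := h
  have hnear : ∀ᶠ s in 𝓝[<] t, ∀ e ∈ {e | e ∈ p.edges}, w e < s :=
    (eventually_all_finite p.edges.finite_toSet).mpr fun e he =>
      eventually_nhdsWithin_of_eventually_nhds (eventually_gt_nhds (hw e he))
  obtain ⟨s, hs, hst⟩ := (hnear.and self_mem_nhdsWithin).exists
  exact ⟨s, hst, p, hp, hs⟩

theorem exists_edge_lt (h : BottleneckConn G w u v t) (huv : u ≠ v) :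
    ∃ e ∈ G.edgeSet, w e < t := by
  obtain ⟨p, -, hw⟩ := h
  cases p with
  | nil => exact absurd rfl huv
  | cons hadj q => exact ⟨s(u, _), hadj, hw _ (by simp)⟩

theorem of_edges (h : BottleneckConn H wH u v t)
    (hedge : ∀ a b, H.Adj a b → wH s(a, b) < t → BottleneckConn G w a b t) :
    BottleneckConn G w u v t := by
  obtain ⟨p, -, hw⟩ := h
  induction p with
  | nil => exact refl
  | cons hadj q ih =>
    exact (hedge _ _ hadj (hw _ (by simp))).trans (ih fun e he => hw e (by simp [he]))

end BottleneckConn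

section Bottleneck

variable (G : SimpleGraph U) (w : Sym2 U → ℝ)

noncomputable def bottleneck (u v : U) : ℝ :=
  sInf {t | BottleneckConn G w u v t}

theorem bottleneck_comm (u v : U) : bottleneck G w u v = bottleneck G w v u := by
  have hsymm (t : ℝ) : BottleneckConn G w u v t ↔ BottleneckConn G w v u t := ⟨.symm, .symm⟩
  simp only [bottleneck, hsymm]

noncomputable def bottleneckWeight : Sym2 U → ℝ :=
  Sym2.lift ⟨bottleneck G w, bottleneck_comm G w⟩

variable {G w}

theorem bddBelow_setOf_bottleneckConn (hG : G.edgeSet.Finite) {u v : U} (huv : u ≠ v) :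
    BddBelow {t | BottleneckConn G w u v t} := by
  obtain ⟨m, hm⟩ := (hG.image w).bddBelow
  refine ⟨m, fun t ht => ?_⟩
  obtain ⟨e, he, hlt⟩ := BottleneckConn.exists_edge_lt ht huv
  exact (hm ⟨e, he, rfl⟩).trans hlt.le

theorem bottleneckConn_iff_bottleneck_lt (hG : G.edgeSet.Finite) {u v : U} (huv : u ≠ v)
    (hconn : ∃ s, BottleneckConn G w u v s) {t : ℝ} :
    BottleneckConn G w u v t ↔ bottleneck G w u v < t := by
  constructor
  · intro ht
    obtain ⟨s, hst, hs⟩ := ht.exists_lt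
    exact (csInf_le (bddBelow_setOf_bottleneckConn hG huv) hs).trans_lt hst
  · intro ht
    obtain ⟨s, hs, hst⟩ := exists_lt_of_csInf_lt hconn ht
    exact BottleneckConn.mono hs hst.le

variable (G w)

-- Pairs never connected in `G` are left out: their `bottleneck` is the junk value `sInf ∅ = 0`.
def bottleneckCompression (S : Finset U) : FinGraph U where
  verts := S
  G :=
    { Adj := fun u v => u ≠ v ∧ u ∈ S ∧ v ∈ S ∧ ∃ t, BottleneckConn G w u v t
      symm := ⟨fun _ _ ⟨huv, hu, hv, t, ht⟩ => ⟨huv.symm, hv, hu, t, ht.symm⟩⟩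
      loopless := ⟨fun _ h => h.1 rfl⟩ }
  support := fun _ _ h => ⟨h.2.1, h.2.2.1⟩

variable {G w}

theorem bottleneckConn_iff_bottleneckCompression (hG : G.edgeSet.Finite) {S : Finset U}
    {u v : U} (hu : u ∈ S) (hv : v ∈ S) {t : ℝ} :
    BottleneckConn G w u v t ↔
      BottleneckConn (bottleneckCompression G w S).G (bottleneckWeight G w) u v t := by
  constructor
  · intro ht
    by_cases huv : u = v
    · subst huv
      exact .refl
    have hadj : (bottleneckCompression G w S).G.Adj u v := ⟨huv, hu, hv, t, ht⟩
    refine .of_walk (.cons hadj .nil) fun e he => ?_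
    rw [Walk.edges_cons, Walk.edges_nil, List.mem_singleton] at he
    subst he
    exact (bottleneckConn_iff_bottleneck_lt hG huv ⟨t, ht⟩).mp ht
  · intro ht
    refine ht.of_edges fun a b ⟨hab, _, _, hconn⟩ hlt => ?_
    exact (bottleneckConn_iff_bottleneck_lt hG hab hconn).mpr hlt

end Bottleneck

theorem compress_graph_for_bottleneck_general {U : Type}
    (G : FinGraph U) (w : Sym2 U → ℝ) (S : Finset U) :
    ∃ (H : FinGraph U) (wH : Sym2 U → ℝ),
      S ⊆ H.verts ∧ H.verts.card ≤ 2 * max S.card 1 ∧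
      ∀ u ∈ S, ∀ v ∈ S, ∀ t : ℝ,
        BottleneckConn G.G w u v t ↔ BottleneckConn H.G wH u v t := by
  refine ⟨bottleneckCompression G.G w S, bottleneckWeight G.G w, subset_rfl, ?_,
    fun u hu v hv t => bottleneckConn_iff_bottleneckCompression G.edgeSet_finite hu hv⟩
  change S.card ≤ 2 * max S.card 1
  omega

/-- every weighted graph `G` with a distinguished set `S ⊆ V(G)` can be
compressed to a weighted graph `H` with `S ⊆ V(H)`, `|V(H)| ≤ 2·max(|S|,1)`, and the same
bottleneck connectivity between vertices of `S`. -/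
theorem compress_graph_for_bottleneck {U : Type} [DecidableEq U]
    (G : FinGraph U) (w : Sym2 U → ℝ) (S : Finset U) (hS : S ⊆ G.verts) :
    ∃ (H : FinGraph U) (wH : Sym2 U → ℝ),
      S ⊆ H.verts ∧ H.verts.card ≤ 2 * max S.card 1 ∧
      ∀ u ∈ S, ∀ v ∈ S, ∀ t : ℝ,
        BottleneckConn G.G w u v t ↔ BottleneckConn H.G wH u v t :=
  compress_graph_for_bottleneck_general G w S
end

section
/- Let L > 0 and let α : ℝ → ℝ be continuously differentiable on [0, L], and suppose that the set {y ∈ [0, L] : α'(y) = 0} is finite. Then ∫_{0}^{2π} N(θ) dθ = ∫_{0}^{L} |α'(y)| dy, where for θ ∈ [0, 2π), N(θ) denotes the (finite) number of points y ∈ [0, L] such that α(y) ≡ θ (mod 2π), i.e., α(y) = θ + 2πk for some integer k. Equivalently, for θ chosen uniformly at random from [0, 2π), the expected number of points y ∈ [0, L] with α(y) ≡ θ (mod 2π) equals (1/2π)∫_{0}^{L} |α'(y)| dy. -/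
/-!
Where `α'` does not vanish, `α` is injective, so the solutions `y` of `α y ∈ θ + 2πℤ` correspond
to the points of `α(I) ∩ (θ + 2πℤ)`; integrating their number over one period `θ ∈ (0, 2π]`
yields the Lebesgue measure of `α(I)`, which is `∫_I |α'|` by the change of variables formula.
Both sides are additive in `I`, so splitting `[0, L]` at the finitely many zeros of `α'`
(and at the endpoint `0`, whose contribution is null on both sides) gives the theorem.
-/

open MeasureTheory Set Real
open scoped ENNReal

theorem setLIntegral_Ioc_tsum_comp_add_mul_int {T : ℝ} (hT : 0 < T) {f : ℝ → ℝ≥0∞}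
    (hf : Measurable f) :
    ∫⁻ θ in Ioc 0 T, ∑' k : ℤ, f (θ + T * k) = ∫⁻ x, f x := by
  have h := (isAddFundamentalDomain_Ioc hT 0).lintegral_eq_tsum'' f
  rw [zero_add] at h
  rw [h, lintegral_tsum (f := fun (k : ℤ) θ => f (θ + T * k))
    fun k => (hf.comp (measurable_add_const _)).aemeasurable]
  let e : ℤ ≃ AddSubgroup.zmultiples T :=
    Equiv.ofInjective (fun n : ℤ => n • T) (zsmul_left_strictMono hT).injective
  rw [← e.tsum_eq]
  refine tsum_congr fun k => setLIntegral_congr_fun measurableSet_Ioc fun θ _ => ?_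
  rw [AddSubgroup.vadd_def, vadd_eq_add]
  show _ = f (k • T + θ)
  rw [zsmul_eq_mul, mul_comm, add_comm]

/-- By Darboux's theorem `f'` has constant sign on `(a, b)`. -/
theorem injOn_Icc_of_hasDerivAt_ne_zero {f f' : ℝ → ℝ} {a b : ℝ}
    (hf : ∀ x ∈ Icc a b, HasDerivAt f (f' x) x) (hf' : ∀ x ∈ Ioo a b, f' x ≠ 0) :
    InjOn f (Icc a b) := by
  have hcont : ContinuousOn f (Icc a b) := fun x hx => (hf x hx).continuousAt.continuousWithinAt
  have hderiv : ∀ x ∈ Ioo a b, HasDerivWithinAt f (f' x) (Ioo a b) x :=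
    fun x hx => (hf x (Ioo_subset_Icc_self hx)).hasDerivWithinAt
  rcases hasDerivWithinAt_forall_lt_or_forall_gt_of_forall_ne (convex_Ioo a b) hderiv hf'
    with hneg | hpos
  · exact (strictAntiOn_of_hasDerivWithinAt_neg (convex_Icc a b) hcont
      (by rwa [interior_Icc]) (by rwa [interior_Icc])).injOn
  · exact (strictMonoOn_of_hasDerivWithinAt_pos (convex_Icc a b) hcont
      (by rwa [interior_Icc]) (by rwa [interior_Icc])).injOn

section Indicatrix

variable (α α' : ℝ → ℝ) (T : ℝ)

/-- The paper's `N(θ)` for the period `T`, counted in `s`. Counting with `encard` in `ℝ≥0∞` makes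
it additive in `s` with no finiteness assumption. -/
noncomputable def fiberCardMod (s : Set ℝ) (θ : ℝ) : ℝ≥0∞ :=
  {y ∈ s | ∃ k : ℤ, α y = θ + T * k}.encard

def IndicatrixFormula (s : Set ℝ) : Prop :=
  Measurable (fiberCardMod α T s) ∧
    ∫⁻ θ in Ioc 0 T, fiberCardMod α T s θ = ∫⁻ x in s, ENNReal.ofReal |α' x|

variable {α α' T}

theorem fiberCardMod_union {s t : Set ℝ} (h : Disjoint s t) (θ : ℝ) :
    fiberCardMod α T (s ∪ t) θ = fiberCardMod α T s θ + fiberCardMod α T t θ := by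
  have hsep : {y ∈ s ∪ t | ∃ k : ℤ, α y = θ + T * k}
      = {y ∈ s | ∃ k : ℤ, α y = θ + T * k} ∪ {y ∈ t | ∃ k : ℤ, α y = θ + T * k} := sep_union
  rw [fiberCardMod, hsep, encard_union_eq (h.mono (sep_subset _ _) (sep_subset _ _)),
    ENat.toENNReal_add]
  rfl

theorem fiberCardMod_eq_tsum_indicator (hT : T ≠ 0) {s : Set ℝ} (hinj : InjOn α s) (θ : ℝ) :
    fiberCardMod α T s θ = ∑' k : ℤ, (α '' s).indicator 1 (θ + T * k) := by
  set K := {k : ℤ | θ + T * k ∈ α '' s}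
  have hlattice : Function.Injective fun k : ℤ => θ + T * k := fun k l hkl => by
    simpa [hT] using hkl
  have himage : α '' {y ∈ s | ∃ k : ℤ, α y = θ + T * k} = (fun k : ℤ => θ + T * k) '' K := by
    ext x
    constructor
    · rintro ⟨y, ⟨hy, k, hk⟩, rfl⟩
      exact ⟨k, ⟨y, hy, hk⟩, hk.symm⟩
    · rintro ⟨k, ⟨y, hy, hyk⟩, rfl⟩
      exact ⟨y, ⟨hy, k, hyk⟩, hyk⟩
  have hK : (fun k : ℤ => (α '' s).indicator (1 : ℝ → ℝ≥0∞) (θ + T * k)) = K.indicator 1 := by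
    ext k; rfl
  rw [fiberCardMod, ← (hinj.mono (sep_subset _ _)).encard_image, himage, hlattice.encard_image, hK,
    ← tsum_subtype]
  simp only [Pi.one_apply, ENNReal.tsum_set_one]

theorem measurable_fiberCardMod_of_injOn (hT : T ≠ 0) {s : Set ℝ} (hinj : InjOn α s)
    (hs : MeasurableSet (α '' s)) : Measurable (fiberCardMod α T s) := by
  simp_rw [funext (fiberCardMod_eq_tsum_indicator hT hinj)]
  exact Measurable.tsum fun k =>
    (measurable_one.indicator hs).comp (measurable_add_const _)

theorem indicatrixFormula_of_injOn (hT : 0 < T) {s : Set ℝ} (hs : MeasurableSet s)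
    (hderiv : ∀ x ∈ s, HasDerivWithinAt α (α' x) s x) (hinj : InjOn α s) :
    IndicatrixFormula α α' T s := by
  have himage : MeasurableSet (α '' s) := hs.image_of_continuousOn_injOn
    (fun x hx => (hderiv x hx).continuousWithinAt) hinj
  refine ⟨measurable_fiberCardMod_of_injOn hT.ne' hinj himage, ?_⟩
  simp_rw [fiberCardMod_eq_tsum_indicator hT.ne' hinj]
  rw [setLIntegral_Ioc_tsum_comp_add_mul_int hT (measurable_one.indicator himage),
    lintegral_indicator_one himage]
  simpa using lintegral_image_eq_lintegral_abs_deriv_mul hs hderiv hinj 1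

theorem IndicatrixFormula.union {s t : Set ℝ} (hs : IndicatrixFormula α α' T s)
    (ht : IndicatrixFormula α α' T t) (hmeas : MeasurableSet t) (hdisj : Disjoint s t) :
    IndicatrixFormula α α' T (s ∪ t) := by
  simp_rw [IndicatrixFormula, funext (fiberCardMod_union hdisj)]
  refine ⟨hs.1.add ht.1, ?_⟩
  rw [lintegral_add_left hs.1, hs.2, ht.2, lintegral_union hmeas hdisj]

theorem indicatrixFormula_Ioc (hT : 0 < T) (S : Finset ℝ) {a b : ℝ}
    (hderiv : ∀ x ∈ Icc a b, HasDerivAt α (α' x) x) (hS : ∀ x ∈ Ioo a b, α' x = 0 → x ∈ S) :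
    IndicatrixFormula α α' T (Ioc a b) := by
  induction S using Finset.induction_on generalizing a b with
  | empty =>
    refine indicatrixFormula_of_injOn hT measurableSet_Ioc
      (fun x hx => (hderiv x (Ioc_subset_Icc_self hx)).hasDerivWithinAt) ?_
    exact (injOn_Icc_of_hasDerivAt_ne_zero hderiv fun x hx h0 => by simpa using hS x hx h0).mono
      Ioc_subset_Icc_self
  | insert c S _ ih =>
    by_cases hc : c ∈ Ioo a b
    · rw [← Ioc_union_Ioc_eq_Ioc hc.1.le hc.2.le]
      refine (ih (fun x hx => hderiv x ⟨hx.1, hx.2.trans hc.2.le⟩) fun x hx h0 => ?_).union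
        (ih (fun x hx => hderiv x ⟨hc.1.le.trans hx.1, hx.2⟩) fun x hx h0 => ?_)
        measurableSet_Ioc (Ioc_disjoint_Ioc_of_le le_rfl)
      · exact (Finset.mem_insert.1 (hS x ⟨hx.1, hx.2.trans hc.2⟩ h0)).resolve_left hx.2.ne
      · exact (Finset.mem_insert.1 (hS x ⟨hc.1.trans hx.1, hx.2⟩ h0)).resolve_left hx.1.ne'
    · exact ih hderiv fun x hx h0 =>
        (Finset.mem_insert.1 (hS x hx h0)).resolve_left fun hxc => hc (hxc ▸ hx)

end Indicatrix

theorem Set.cast_ncard_eq_toReal_encard {β : Type*} (s : Set β) :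
    (s.ncard : ℝ) = (s.encard : ℝ≥0∞).toReal := by
  rw [ncard_def]
  cases s.encard <;> simp

/-- Banach-indicatrix formula for the (lifted) tangent angle `α` of a curve:
if `α` is continuously differentiable on `[0, L]` with finitely many critical points, then
`∫_0^{2π} N(θ) dθ = ∫_0^L |α'(y)| dy`, where `N(θ)` is the number of `y ∈ [0, L]` with
`α(y) ≡ θ (mod 2π)`. -/
theorem expected_marked_points_eq_total_absolute_curvature
    (L : ℝ) (hL : 0 < L) (α α' : ℝ → ℝ)
    (hderiv : ∀ y ∈ Set.Icc (0 : ℝ) L, HasDerivAt α (α' y) y)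
    (hcont : ContinuousOn α' (Set.Icc (0 : ℝ) L))
    (hfin : {y ∈ Set.Icc (0 : ℝ) L | α' y = 0}.Finite) :
    ∫ θ in (0 : ℝ)..(2 * Real.pi),
        ((Set.ncard {y ∈ Set.Icc (0 : ℝ) L |
          ∃ k : ℤ, α y = θ + 2 * Real.pi * (k : ℝ)} : ℕ) : ℝ)
      = ∫ y in (0 : ℝ)..L, |α' y| := by
  have hT : 0 < 2 * π := by positivity
  obtain ⟨hmeas, hformula⟩ : IndicatrixFormula α α' (2 * π) (Icc 0 L) := by
    rw [← Ioc_insert_left hL.le, insert_eq]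
    refine (indicatrixFormula_of_injOn hT (measurableSet_singleton 0) ?_
      (injOn_singleton _ _)).union (indicatrixFormula_Ioc hT hfin.toFinset hderiv
        fun x hx h0 => ?_) measurableSet_Ioc (by simp)
    · rintro y rfl
      exact (hderiv 0 ⟨le_rfl, hL.le⟩).hasDerivWithinAt
    · exact hfin.mem_toFinset.2 ⟨Ioo_subset_Icc_self hx, h0⟩
  have hint : IntegrableOn (fun y => |α' y|) (Icc 0 L) := hcont.abs.integrableOn_Icc
  have hfinite : ∫⁻ θ in Ioc 0 (2 * π), fiberCardMod α (2 * π) (Icc 0 L) θ ≠ ∞ :=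
    hformula ▸ hint.lintegral_lt_top.ne
  calc _ = ∫ θ in Ioc 0 (2 * π), (fiberCardMod α (2 * π) (Icc 0 L) θ).toReal := by
        rw [intervalIntegral.integral_of_le hT.le]
        simp_rw [Set.cast_ncard_eq_toReal_encard]
        rfl
    _ = (∫⁻ θ in Ioc 0 (2 * π), fiberCardMod α (2 * π) (Icc 0 L) θ).toReal :=
        integral_toReal hmeas.aemeasurable (ae_lt_top hmeas hfinite)
    _ = ∫ y in Icc 0 L, |α' y| := by
        rw [hformula, integral_eq_lintegral_of_nonneg_ae (.of_forall fun y => abs_nonneg _)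
          hint.aestronglyMeasurable]
    _ = ∫ y in (0 : ℝ)..L, |α' y| := by
        rw [intervalIntegral.integral_of_le hL.le, integral_Icc_eq_integral_Ioc]
end
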